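/- arXiv:math/0411073 — 2 statements merged into one kernel-verified Lean document; each statement's English description precedes it below -/
import Mathlib

section
/- Let P be a simplicial reflexive polytope of dimension n with δ_P > 0 and |V(P)| = n + n/δ_P. Then ⟨v,u⟩ ∈ {−1, δ_P} for every vertex v of P and every vertex u of P*. -/
open Set Pointwise

namespace Fano

/-- The ambient rational vector space `N_ℚ = ℚⁿ` (identified with its dual `M_ℚ`). -/
abbrev E (n : ℕ) : Type := Fin n → ℚ

/-- The standard pairing `⟨x, y⟩ = ∑ i, x i * y i` between `N_ℚ` and `M_ℚ`. -/
def pairing {n : ℕ} (x y : E n) : ℚ := ∑ i, x i * y i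

/-- A point of `ℚⁿ` is a lattice point if all its coordinates are integers. -/
def IsLatticePt {n : ℕ} (x : E n) : Prop := ∀ i, ∃ z : ℤ, x i = (z : ℚ)

/-- A lattice polytope: the convex hull of finitely many lattice points. -/
def IsLatticePolytope {n : ℕ} (P : Set (E n)) : Prop :=
  ∃ S : Finset (E n), (∀ x ∈ S, IsLatticePt x) ∧ P = convexHull ℚ (S : Set (E n))

/-- The dual polytope `P* = {y | ⟨x, y⟩ ≥ -1 for all x ∈ P}`. -/
def dualPolytope {n : ℕ} (P : Set (E n)) : Set (E n) :=
  {y | ∀ x ∈ P, -1 ≤ pairing x y}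

/-- The set of vertices (= extreme points) of a polytope. -/
def vertices {n : ℕ} (P : Set (E n)) : Set (E n) := Set.extremePoints ℚ P

/-- `F` is a (nonempty, proper) face of `P`: it is cut out by a supporting hyperplane. -/
def IsFace {n : ℕ} (P F : Set (E n)) : Prop :=
  ∃ (u : E n) (c : ℚ), (∀ x ∈ P, c ≤ pairing x u) ∧
    F = {x ∈ P | pairing x u = c} ∧ F.Nonempty ∧ F ≠ P

/-- A facet of an `n`-dimensional polytope: a face of dimension `n - 1`. -/
def IsFacet {n : ℕ} (P F : Set (E n)) : Prop :=
  IsFace P F ∧ Module.finrank ℚ (affineSpan ℚ F).direction = n - 1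

/-- A reflexive polytope: a lattice polytope containing the origin in its interior
(hence of full dimension `n`) whose dual polytope is again a lattice polytope. -/
def IsReflexivePolytope {n : ℕ} (P : Set (E n)) : Prop :=
  IsLatticePolytope P ∧ (0 : E n) ∈ interior P ∧ IsLatticePolytope (dualPolytope P)

/-- A polytope is simplicial if every facet has exactly `n` vertices
and these are linearly independent. -/
def IsSimplicial {n : ℕ} (P : Set (E n)) : Prop :=
  ∀ F : Set (E n), IsFacet P F →
    ∃ e : Fin n → E n, vertices F = Set.range e ∧ LinearIndependent ℚ e

/-- For `u ∈ V(P*)`, the corresponding facet `F_u = {x ∈ P | ⟨x, u⟩ = -1}` of `P`. -/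
def facetOf {n : ℕ} (P : Set (E n)) (u : E n) : Set (E n) :=
  {x ∈ P | pairing x u = -1}

/-- `δ` is the quantity `δ_P = min{⟨v,u⟩ | v ∈ V(P), u ∈ V(P*), v ∉ F_u}`. -/
def IsDeltaOf {n : ℕ} (P : Set (E n)) (δ : ℚ) : Prop :=
  (∃ v ∈ vertices P, ∃ u ∈ vertices (dualPolytope P), v ∉ facetOf P u ∧ pairing v u = δ) ∧
  (∀ v ∈ vertices P, ∀ u ∈ vertices (dualPolytope P), v ∉ facetOf P u → δ ≤ pairing v u)

/-- A vertex `v` is adjacent to a facet `F = Conv(e₁, …, eₙ)` of a simplicial polytope if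
replacing some vertex of `F` by `v` again yields a facet of `P`. -/
def AdjacentTo {n : ℕ} (P : Set (E n)) (v : E n) (F : Set (E n)) : Prop :=
  ∃ w ∈ vertices F, IsFacet P (convexHull ℚ (insert v (vertices F \ {w})))


section Helpers


variable {n : ℕ}

/-- pairing as a linear map in the first argument -/
def pl (u : E n) : E n →ₗ[ℚ] ℚ where
  toFun x := pairing x u
  map_add' x y := by simp [pairing, add_mul, Finset.sum_add_distrib]
  map_smul' c x := by simp [pairing, Finset.mul_sum, mul_assoc]

@[simp] lemma pl_apply (u x : E n) : pl u x = pairing x u := rfl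

lemma pairing_comm (x y : E n) : pairing x y = pairing y x := by
  simp [pairing, mul_comm]

@[simp] lemma pairing_zero_right (x : E n) : pairing x 0 = 0 := by simp [pairing]
@[simp] lemma pairing_zero_left (x : E n) : pairing 0 x = 0 := by simp [pairing]

lemma pairing_add_left (x y u : E n) : pairing (x + y) u = pairing x u + pairing y u :=
  (pl u).map_add x y

lemma pairing_smul_left (c : ℚ) (x u : E n) : pairing (c • x) u = c * pairing x u :=
  (pl u).map_smul c x

lemma pairing_smul_right (c : ℚ) (x u : E n) : pairing x (c • u) = c * pairing x u := by
  rw [pairing_comm, pairing_smul_left, pairing_comm]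

lemma pairing_add_right (x u v : E n) : pairing x (u + v) = pairing x u + pairing x v := by
  rw [pairing_comm, pairing_add_left, pairing_comm x u, pairing_comm x v]

lemma pairing_neg_right (x u : E n) : pairing x (-u) = - pairing x u := by
  have := pairing_smul_right (-1) x u; simpa using this

lemma pairing_self_pos {u : E n} (hu : u ≠ 0) : 0 < pairing u u := by
  have h : ∀ i, 0 ≤ u i * u i := fun i => mul_self_nonneg _
  have : pairing u u ≠ 0 := by
    intro h0
    apply hu
    funext i
    have := (Finset.sum_eq_zero_iff_of_nonneg (fun i _ => h i)).1 h0 i (Finset.mem_univ i)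
    exact mul_self_eq_zero.1 this
  rcases lt_or_eq_of_le (Finset.sum_nonneg fun i _ => h i) with h1 | h1
  · exact h1
  · exact absurd h1.symm this

/-- values ≥ c on a set extend over the convex hull -/
lemma hull_ge {A : Set (E n)} {u : E n} {c : ℚ} (h : ∀ s ∈ A, c ≤ pairing s u) :
    ∀ x ∈ convexHull ℚ A, c ≤ pairing x u := by
  intro x hx
  have hconv : Convex ℚ {x : E n | c ≤ pl u x} := convex_halfSpace_ge (LinearMap.isLinear _) c
  exact convexHull_min (fun s hs => h s hs) hconv hx

lemma hull_le {A : Set (E n)} {u : E n} {c : ℚ} (h : ∀ s ∈ A, pairing s u ≤ c) :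
    ∀ x ∈ convexHull ℚ A, pairing x u ≤ c := by
  intro x hx
  have hconv : Convex ℚ {x : E n | pl u x ≤ c} := convex_halfSpace_le (LinearMap.isLinear _) c
  exact convexHull_min (fun s hs => h s hs) hconv hx



/-- If `s ∈ S` is not in the hull of the rest, it is an extreme point of the hull. -/
lemma extreme_of_not_mem_hull_erase [DecidableEq (E n)] {S : Finset (E n)} {s : E n}
    (hs : s ∈ S) (h : s ∉ convexHull ℚ (↑(S.erase s) : Set (E n))) :
    s ∈ Set.extremePoints ℚ (convexHull ℚ (S : Set (E n))) := by
  constructor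
  · exact subset_convexHull ℚ _ hs
  intro y hy z hz hseg
  rcases (S.erase s).eq_empty_or_nonempty with he | hne
  · -- S = {s}
    have hS : (S : Set (E n)) ⊆ {s} := by
      intro t ht
      by_contra hts
      have : t ∈ S.erase s := Finset.mem_erase.2 ⟨hts, ht⟩
      simp [he] at this
    have hsub : convexHull ℚ (S : Set (E n)) ⊆ {s} := by
      have := convexHull_mono hS (𝕜 := ℚ)
      simpa [convexHull_singleton] using this
    exact hsub hy
  · have hSin : (S : Set (E n)) = insert s (↑(S.erase s)) := by
      rw [← Finset.coe_insert, Finset.insert_erase hs]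
    rw [hSin, convexHull_insert hne.to_set] at hy hz
    rw [mem_convexJoin] at hy hz
    obtain ⟨s₁, hs₁, d₁, hd₁, hy₁⟩ := hy
    obtain ⟨s₂, hs₂, d₂, hd₂, hz₂⟩ := hz
    rw [Set.mem_singleton_iff] at hs₁ hs₂
    rw [hs₁] at hy₁
    rw [hs₂] at hz₂
    obtain ⟨a₁, b₁, ha₁, hb₁, hab₁, hy'⟩ := hy₁
    obtain ⟨a₂, b₂, ha₂, hb₂, hab₂, hz'⟩ := hz₂
    obtain ⟨α, β, hα, hβ, hαβ, hs'⟩ := hseg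
    have hsub : α • (a₁ • s + b₁ • d₁) + β • (a₂ • s + b₂ • d₂) = s := by
      rw [hy', hz', hs']
    set c := α * b₁ + β * b₂ with hc
    have hsum : α * a₁ + β * a₂ + c = 1 := by
      rw [hc]; nlinarith [hab₁, hab₂, hαβ]
    have hcnn : 0 ≤ c := by positivity
    rcases eq_or_lt_of_le hcnn with hc0 | hcpos
    · have hb₁0 : b₁ = 0 := by nlinarith
      have hb₂0 : b₂ = 0 := by nlinarith
      have ha₁1 : a₁ = 1 := by linarith
      have ha₂1 : a₂ = 1 := by linarith
      rw [hb₁0, ha₁1] at hy'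
      rw [hb₂0, ha₂1] at hz'
      simp only [one_smul, zero_smul, add_zero] at hy' hz'
      exact hy'.symm
    · exfalso
      apply h
      have hcne : c ≠ 0 := ne_of_gt hcpos
      have hmem : s ∈ segment ℚ d₁ d₂ := by
        refine ⟨α * b₁ / c, β * b₂ / c, by positivity, by positivity, by field_simp; exact hc.symm, ?_⟩
        funext i
        have hsubi := congrFun hsub i
        simp only [Pi.add_apply, Pi.smul_apply, smul_eq_mul] at hsubi ⊢
        field_simp
        linear_combination hsubi - s i * hsum
      exact (convex_convexHull ℚ _).segment_subset hd₁ hd₂ hmem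


lemma hull_extremePoints [DecidableEq (E n)] (S : Finset (E n)) :
    convexHull ℚ (S : Set (E n))
      ⊆ convexHull ℚ (Set.extremePoints ℚ (convexHull ℚ (S : Set (E n)))) := by
  classical
  induction S using Finset.strongInduction with
  | _ S ih =>
    by_cases hall : ∀ s ∈ S, s ∉ convexHull ℚ (↑(S.erase s) : Set (E n))
    · refine convexHull_min ?_ (convex_convexHull ℚ _)
      intro s hsS
      exact subset_convexHull ℚ _ (extreme_of_not_mem_hull_erase hsS (hall s hsS))
    · push_neg at hall
      obtain ⟨s, hsS, hmem⟩ := hall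
      have heq : convexHull ℚ (S : Set (E n)) = convexHull ℚ (↑(S.erase s) : Set (E n)) := by
        refine subset_antisymm ?_ (convexHull_mono (by exact_mod_cast Finset.erase_subset s S))
        refine convexHull_min ?_ (convex_convexHull ℚ _)
        intro t ht
        by_cases hts : t = s
        · subst hts; exact hmem
        · exact subset_convexHull ℚ _ (by exact_mod_cast Finset.mem_erase.2 ⟨hts, ht⟩)
      intro x hx
      rw [heq] at hx
      have := ih (S.erase s) (Finset.erase_ssubset hsS) hx
      rw [← heq] at this
      exact this


end Helpers

section Mid
variable {n : ℕ}

lemma zero_mem_dual (P : Set (E n)) : (0 : E n) ∈ dualPolytope P := by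
  intro x _; simp [pairing]

lemma mem_dual_iff_gen {P : Set (E n)} {S : Finset (E n)}
    (hP : P = convexHull ℚ (S : Set (E n))) (y : E n) :
    y ∈ dualPolytope P ↔ ∀ s ∈ S, -1 ≤ pairing s y := by
  constructor
  · intro hy s hs
    exact hy s (hP ▸ subset_convexHull ℚ _ hs)
  · intro h x hx
    rw [hP] at hx
    have := hull_ge (u := y) (c := -1) (A := (S : Set (E n))) (fun s hs => h s hs) x hx
    exact this

/-- vertices of P lying on the facet are exactly the vertices of the facet -/
lemma vertices_facetOf {P : Set (E n)} {u : E n} (hu : u ∈ dualPolytope P) :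
    vertices (facetOf P u) = vertices P ∩ facetOf P u := by
  ext v
  constructor
  · rintro ⟨hvF, hext⟩
    refine ⟨⟨hvF.1, ?_⟩, hvF⟩
    intro y hy z hz hseg
    -- show y z ∈ facetOf P u
    obtain ⟨a, b, ha, hb, hab, hv⟩ := hseg
    have hyu : -1 ≤ pairing y u := hu y hy
    have hzu : -1 ≤ pairing z u := hu z hz
    have hvu : pairing v u = -1 := hvF.2
    have hcomb : a * pairing y u + b * pairing z u = -1 := by
      rw [← hvu, ← hv, pairing_add_left, pairing_smul_left, pairing_smul_left]
    have hy1 : pairing y u = -1 := by nlinarith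
    have hz1 : pairing z u = -1 := by nlinarith
    exact hext ⟨hy, hy1⟩ ⟨hz, hz1⟩ ⟨a, b, ha, hb, hab, hv⟩
  · rintro ⟨⟨hvP, hext⟩, hvF⟩
    refine ⟨hvF, ?_⟩
    intro y hy z hz hseg
    exact hext hy.1 hz.1 hseg

end Mid

section Facet
variable {n : ℕ}

/-- pairing as a bilinear map, second argument first -/
def plB : E n →ₗ[ℚ] E n →ₗ[ℚ] ℚ :=
  LinearMap.mk₂ ℚ (fun w x => pairing x w)
    (fun m₁ m₂ x => by simp [pairing_add_right])
    (fun c m x => by simp [pairing_smul_right])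
    (fun m x y => by simp [pairing_add_left])
    (fun c m x => by simp [pairing_smul_left])

@[simp] lemma plB_apply (w x : E n) : plB w x = pairing x w := rfl

lemma finrank_ker_pl {u : E n} (hu : u ≠ 0) :
    Module.finrank ℚ (LinearMap.ker (pl u)) = n - 1 := by
  have h0 : pairing u u ≠ 0 := ne_of_gt (pairing_self_pos hu)
  have hsurj : Function.Surjective (pl u) := by
    intro c
    refine ⟨(c / pairing u u) • u, ?_⟩
    simp only [pl_apply, pairing_smul_left]
    field_simp
  have hr : LinearMap.range (pl u) = ⊤ := LinearMap.range_eq_top.2 hsurj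
  have h := LinearMap.finrank_range_add_finrank_ker (pl u)
  rw [hr, finrank_top, Module.finrank_self, Module.finrank_fin_fun] at h
  omega

set_option maxHeartbeats 1600000 in
/-- key geometric fact: for a vertex u of the dual polytope, F_u is a facet. -/
lemma isFacet_facetOf {P : Set (E n)} {S : Finset (E n)}
    (hP : P = convexHull ℚ (S : Set (E n)))
    {u : E n} (hu : u ∈ vertices (dualPolytope P)) (hune : u ≠ 0)
    (h0P : (0 : E n) ∈ P) :
    IsFacet P (facetOf P u) := by
  classical
  have huD : u ∈ dualPolytope P := extremePoints_subset hu
  have hSne : S.Nonempty := by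
    rcases S.eq_empty_or_nonempty with h | h
    · rw [h] at hP; simp at hP; rw [hP] at h0P; exact absurd h0P (Set.notMem_empty 0)
    · exact h
  -- Nonemptiness of the facet
  have hFne : (facetOf P u).Nonempty := by
    by_contra hemp
    rw [Set.not_nonempty_iff_eq_empty] at hemp
    set m := S.inf' hSne (fun s => pairing s u) with hm
    obtain ⟨s₀, hs₀S, hs₀⟩ := S.exists_mem_eq_inf' hSne (fun s => pairing s u)
    have hs₀P : s₀ ∈ P := hP ▸ subset_convexHull ℚ _ hs₀S
    have hm1 : -1 ≤ m := by rw [hm, hs₀]; exact huD s₀ hs₀P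
    have hmne : m ≠ -1 := by
      intro hmeq
      have : s₀ ∈ facetOf P u := ⟨hs₀P, by rw [← hs₀, ← hm, hmeq]⟩
      rw [hemp] at this; exact this
    have hmgt : -1 < m := lt_of_le_of_ne hm1 (Ne.symm hmne)
    set t : ℚ := if m < 0 then -1 / m else 2 with ht
    have ht1 : 1 < t := by
      rw [ht]
      split_ifs with h
      · rw [lt_div_iff_of_neg h]; linarith
      · norm_num
    have htpos : 0 < t := lt_trans one_pos ht1
    have hmem : t • u ∈ dualPolytope P := by
      rw [mem_dual_iff_gen hP]
      intro s hs
      rw [pairing_smul_right]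
      have hms : m ≤ pairing s u := by rw [hm]; exact Finset.inf'_le _ hs
      rcases le_or_gt 0 (pairing s u) with hp | hp
      · nlinarith
      · have hmneg : m < 0 := lt_of_le_of_lt hms hp
        rw [ht, if_pos hmneg]
        rw [div_mul_eq_mul_div, le_div_iff_of_neg hmneg]
        nlinarith
    have hseg : u ∈ openSegment ℚ (t • u) (0 : E n) := by
      refine ⟨1 / t, 1 - 1 / t, by positivity, ?_, by ring, ?_⟩
      · have : 1 / t < 1 := by rw [div_lt_one htpos]; exact ht1
        linarith
      · rw [smul_smul, smul_zero, add_zero]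
        rw [one_div, inv_mul_cancel₀ (ne_of_gt htpos), one_smul]
    have := hu.2 (zero_mem_dual P) hmem (by rw [openSegment_symm]; exact hseg)
    exact hune this.symm
  obtain ⟨x₀, hx₀⟩ := hFne
  -- It is a face
  have hface : IsFace P (facetOf P u) := by
    refine ⟨u, -1, fun x hx => huD x hx, rfl, ⟨x₀, hx₀⟩, ?_⟩
    intro heq
    have h0F : (0 : E n) ∈ facetOf P u := by rw [heq]; exact h0P
    have := h0F.2
    rw [pairing_zero_left] at this
    norm_num at this
  -- dimension computation
  refine ⟨hface, ?_⟩
  have hdirle : (affineSpan ℚ (facetOf P u)).direction ≤ LinearMap.ker (pl u) := by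
    rw [direction_affineSpan]
    rw [vectorSpan_def]
    rw [Submodule.span_le]
    rintro w ⟨x, hx, y, hy, rfl⟩
    simp only [SetLike.mem_coe, LinearMap.mem_ker, vsub_eq_sub, map_sub]
    simp only [pl_apply, hx.2, hy.2, sub_self]
  have hupper : Module.finrank ℚ (affineSpan ℚ (facetOf P u)).direction ≤ n - 1 := by
    rw [← finrank_ker_pl hune]
    exact Submodule.finrank_mono hdirle
  by_contra hne'
  have hlt : Module.finrank ℚ (affineSpan ℚ (facetOf P u)).direction < n - 1 :=
    lt_of_le_of_ne hupper hne'
  -- build V0 containing the facet, of finrank ≤ n - 1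
  set W := (affineSpan ℚ (facetOf P u)).direction with hW
  set V0 := W ⊔ (ℚ ∙ x₀) with hV0
  have hn1 : 1 ≤ n := by
    by_contra hn0
    push_neg at hn0
    interval_cases n
    · -- n = 0 : u = 0 impossible
      apply hune
      funext i
      omega
  have hV0rank : Module.finrank ℚ V0 ≤ n - 1 := by
    have h2 : Module.finrank ℚ (ℚ ∙ x₀) ≤ 1 := by
      have h := finrank_span_le_card (R := ℚ) ({x₀} : Set (E n))
      simpa using h
    have h3 : Module.finrank ℚ V0 ≤ Module.finrank ℚ W + 1 := by
      calc Module.finrank ℚ V0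
          ≤ Module.finrank ℚ W + Module.finrank ℚ ↥(ℚ ∙ x₀) := by
            rw [hV0]
            exact Submodule.finrank_add_le_finrank_add_finrank W (ℚ ∙ x₀)
        _ ≤ Module.finrank ℚ W + 1 := Nat.add_le_add_left h2 _
    omega
  have hFV0 : ∀ x ∈ facetOf P u, x ∈ V0 := by
    intro x hx
    have hxx₀ : x - x₀ ∈ W := by
      rw [hW, direction_affineSpan]
      have h := vsub_mem_vectorSpan ℚ hx hx₀
      rwa [vsub_eq_sub] at h
    have hxeq : x = (x - x₀) + x₀ := by abel
    rw [hxeq, hV0]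
    exact Submodule.add_mem _ (Submodule.mem_sup_left hxx₀)
      (Submodule.mem_sup_right (Submodule.mem_span_singleton_self x₀))
  -- construct w ≠ 0 with pairing x w = 0 for all x in V0
  set Φ : E n →ₗ[ℚ] (Module.Dual ℚ V0) := (LinearMap.lcomp ℚ ℚ V0.subtype).comp plB with hΦ
  have hrange : Module.finrank ℚ (LinearMap.range Φ) ≤ n - 1 := by
    calc Module.finrank ℚ (LinearMap.range Φ)
        ≤ Module.finrank ℚ (Module.Dual ℚ V0) := Submodule.finrank_le _
      _ = Module.finrank ℚ V0 := Subspace.dual_finrank_eq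
      _ ≤ n - 1 := hV0rank
  have hkerpos : 0 < Module.finrank ℚ (LinearMap.ker Φ) := by
    have h := LinearMap.finrank_range_add_finrank_ker Φ
    rw [Module.finrank_fin_fun] at h
    omega
  obtain ⟨w, hwker, hwne⟩ : ∃ w ∈ LinearMap.ker Φ, w ≠ 0 := by
    have hbot : LinearMap.ker Φ ≠ ⊥ := by
      intro hb
      rw [hb] at hkerpos
      simp [finrank_bot] at hkerpos
    exact Submodule.exists_mem_ne_zero_of_ne_bot hbot
  have hwV0 : ∀ x ∈ V0, pairing x w = 0 := by
    intro x hx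
    have h0 : Φ w ⟨x, hx⟩ = 0 := by rw [LinearMap.mem_ker.1 hwker]; rfl
    simpa [hΦ] using h0
  -- choose a small ε > 0
  set S' := S.filter (fun s => pairing s u ≠ -1) with hS'
  set ε : ℚ := if hne : S'.Nonempty
    then S'.inf' hne (fun s => (pairing s u + 1) / (|pairing s w| + 1)) else 1 with hε
  have hS'pos : ∀ s ∈ S', 0 < pairing s u + 1 := by
    intro s hs
    have hsS : s ∈ S := Finset.mem_of_mem_filter s hs
    have h1 : -1 ≤ pairing s u := huD s (hP ▸ subset_convexHull ℚ _ hsS)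
    have h2 : pairing s u ≠ -1 := by
      have := (Finset.mem_filter.1 hs).2
      simpa using this
    have := lt_of_le_of_ne h1 (Ne.symm h2)
    linarith
  have hεpos : 0 < ε := by
    rw [hε]
    split_ifs with h
    · rw [Finset.lt_inf'_iff]
      intro s hs
      have := hS'pos s hs
      positivity
    · norm_num
  have hεle : ∀ s ∈ S', ε * (|pairing s w| + 1) ≤ pairing s u + 1 := by
    intro s hs
    have h2 : (0:ℚ) < |pairing s w| + 1 := by positivity
    have h1 : ε ≤ (pairing s u + 1) / (|pairing s w| + 1) := by
      rw [hε, dif_pos ⟨s, hs⟩]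
      exact Finset.inf'_le _ hs
    exact (le_div_iff₀ h2).1 h1
  have hkey : ∀ σ : ℚ, σ = 1 ∨ σ = -1 → u + (σ * ε) • w ∈ dualPolytope P := by
    intro σ hσ
    rw [mem_dual_iff_gen hP]
    intro s hs
    rw [pairing_add_right, pairing_smul_right]
    by_cases hcase : pairing s u = -1
    · have hsF : s ∈ facetOf P u := ⟨hP ▸ subset_convexHull ℚ _ hs, hcase⟩
      rw [hwV0 s (hFV0 s hsF), hcase]
      norm_num
    · have hs' : s ∈ S' := Finset.mem_filter.2 ⟨hs, by simpa using hcase⟩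
      have h1 := hεle s hs'
      have h2 := le_abs_self (pairing s w)
      have h3 := neg_abs_le (pairing s w)
      rcases hσ with rfl | rfl
      · have h4 : ε * -|pairing s w| ≤ ε * pairing s w :=
          mul_le_mul_of_nonneg_left h3 hεpos.le
        nlinarith [hεpos]
      · have h4 : ε * pairing s w ≤ ε * |pairing s w| :=
          mul_le_mul_of_nonneg_left h2 hεpos.le
        nlinarith [hεpos]
  have hplus : u + ε • w ∈ dualPolytope P := by
    have := hkey 1 (Or.inl rfl)
    simpa using this
  have hminus : u - ε • w ∈ dualPolytope P := by
    have := hkey (-1) (Or.inr rfl)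
    have heq : u + ((-1 : ℚ) * ε) • w = u - ε • w := by
      rw [neg_one_mul, neg_smul, ← sub_eq_add_neg]
    rwa [heq] at this
  have hseg : u ∈ openSegment ℚ (u + ε • w) (u - ε • w) := by
    refine ⟨1/2, 1/2, by norm_num, by norm_num, by norm_num, ?_⟩
    funext i
    simp only [Pi.add_apply, Pi.sub_apply, Pi.smul_apply, smul_eq_mul]
    ring
  have hcontr := hu.2 hplus hminus hseg
  have hww : ε • w = 0 := by
    have : u + ε • w - u = 0 := by rw [hcontr]; simp
    simpa using this
  rcases smul_eq_zero.1 hww with h | h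
  · exact absurd h (ne_of_gt hεpos)
  · exact hwne h

end Facet

set_option maxHeartbeats 2000000 in
/-- If `P` is a simplicial reflexive polytope of dimension `n` with
`δ_P > 0` and `|V(P)| = n + n / δ_P`, then `⟨v,u⟩ ∈ {-1, δ_P}` for all `v ∈ V(P)`,
`u ∈ V(P*)`. -/
theorem pairing_eq_neg_one_or_delta {n : ℕ} (hn : 1 ≤ n) (P : Set (E n)) (δ : ℚ)
    (hrefl : IsReflexivePolytope P) (hsimp : IsSimplicial P)
    (hδ : IsDeltaOf P δ) (hpos : 0 < δ)
    (hcard : ((vertices P).ncard : ℚ) = n + n / δ) :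
    ∀ v ∈ vertices P, ∀ u ∈ vertices (dualPolytope P),
      pairing v u = -1 ∨ pairing v u = δ := by
  classical
  obtain ⟨⟨S, hSlat, hPS⟩, h0int, ⟨T, hTlat, hDT⟩⟩ := hrefl
  have h0P : (0 : E n) ∈ P := interior_subset h0int
  have hVpS : vertices P ⊆ (S : Set (E n)) := by
    show Set.extremePoints ℚ P ⊆ (S : Set (E n))
    rw [hPS]
    exact extremePoints_convexHull_subset
  have hVpfin : (vertices P).Finite := S.finite_toSet.subset hVpS
  set K := hVpfin.toFinset with hK
  have hKmem : ∀ v, v ∈ K ↔ v ∈ vertices P := fun v => hVpfin.mem_toFinset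
  have hKcard : (K.card : ℚ) = n + n / δ := by
    rw [← hcard, Set.ncard_eq_toFinset_card _ hVpfin]
  have hSne : S.Nonempty := by
    rcases S.eq_empty_or_nonempty with h | h
    · rw [h] at hPS
      simp only [Finset.coe_empty, convexHull_empty] at hPS
      rw [hPS] at h0P
      exact absurd h0P (Set.notMem_empty 0)
    · exact h
  obtain ⟨v₀, hv₀, u₀', hu₀', hnotF₀, hδval⟩ := hδ.1
  have hune : ∀ u ∈ vertices (dualPolytope P), u ≠ 0 := by
    intro u hu h0
    subst h0
    have hnot : v₀ ∉ facetOf P (0 : E n) := by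
      intro hf
      have h := hf.2
      rw [pairing_zero_right] at h
      norm_num at h
    have h := hδ.2 v₀ hv₀ 0 hu hnot
    rw [pairing_zero_right] at h
    exact absurd (lt_of_lt_of_le hpos h) (lt_irrefl 0)
  set s0 : E n := ∑ v ∈ K, v with hs0
  have hsum_eq : ∀ u : E n, ∑ v ∈ K, pairing v u = pairing s0 u := by
    intro u
    rw [hs0]
    exact (map_sum (pl u) _ K).symm
  have hperu : ∀ u ∈ vertices (dualPolytope P),
      ((∑ v ∈ K.filter (fun v => pairing v u = -1), pairing v u) = -(n : ℚ)) ∧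
      (((K.filter (fun v => ¬ pairing v u = -1)).card : ℚ) = n / δ) ∧
      (∀ v ∈ K.filter (fun v => ¬ pairing v u = -1), δ ≤ pairing v u) := by
    intro u hu
    have huD : u ∈ dualPolytope P := extremePoints_subset hu
    have hfacet := isFacet_facetOf hPS hu (hune u hu) h0P
    obtain ⟨e, he, heLI⟩ := hsimp _ hfacet
    have hAset : (↑(K.filter (fun v => pairing v u = -1)) : Set (E n)) = Set.range e := by
      rw [← he, vertices_facetOf huD]
      ext v
      simp only [Finset.coe_filter, Set.mem_setOf_eq, Set.mem_inter_iff]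
      constructor
      · rintro ⟨hvK, hpv⟩
        have hvP : v ∈ vertices P := (hKmem v).1 hvK
        exact ⟨hvP, extremePoints_subset hvP, hpv⟩
      · rintro ⟨hvV, hvF⟩
        exact ⟨(hKmem v).2 hvV, hvF.2⟩
    have hAcard : (K.filter (fun v => pairing v u = -1)).card = n := by
      have h1 : ((K.filter (fun v => pairing v u = -1) : Finset (E n)) : Set (E n)).ncard
          = (Set.range e).ncard := by rw [hAset]
      rw [Set.ncard_coe_finset] at h1
      have h2 : (Set.range e).ncard = n := by
        have hre : Set.range e = ↑(Finset.univ.image e) := by simp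
        rw [hre, Set.ncard_coe_finset, Finset.card_image_of_injective _ heLI.injective,
          Finset.card_univ, Fintype.card_fin]
      rw [h2] at h1
      exact h1
    refine ⟨?_, ?_, ?_⟩
    · rw [Finset.sum_congr rfl (fun v hv => (Finset.mem_filter.1 hv).2), Finset.sum_const,
        hAcard, nsmul_eq_mul]
      ring
    · have hsplit := Finset.card_filter_add_card_filter_not
        (s := K) (p := fun v => pairing v u = -1)
      have hcast : ((K.filter (fun v => ¬ pairing v u = -1)).card : ℚ)
          = (K.card : ℚ) - ((K.filter (fun v => pairing v u = -1)).card : ℚ) := by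
        push_cast [← hsplit]
        ring
      rw [hcast, hAcard, hKcard]
      ring
    · intro v hv
      obtain ⟨hvK, hvne⟩ := Finset.mem_filter.1 hv
      have hvP := (hKmem v).1 hvK
      refine hδ.2 v hvP u hu ?_
      intro hf
      exact hvne hf.2
  have hQge : ∀ u ∈ vertices (dualPolytope P), 0 ≤ pairing s0 u := by
    intro u hu
    obtain ⟨hA, hB, hge⟩ := hperu u hu
    have hsplit : (∑ v ∈ K.filter (fun v => pairing v u = -1), pairing v u)
        + (∑ v ∈ K.filter (fun v => ¬ pairing v u = -1), pairing v u)
        = ∑ v ∈ K, pairing v u :=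
      Finset.sum_filter_add_sum_filter_not K _ _
    have h1 : ∑ _v ∈ K.filter (fun v => ¬ pairing v u = -1), δ
        ≤ ∑ v ∈ K.filter (fun v => ¬ pairing v u = -1), pairing v u :=
      Finset.sum_le_sum hge
    rw [Finset.sum_const, nsmul_eq_mul] at h1
    have h2 : ((K.filter (fun v => ¬ pairing v u = -1)).card : ℚ) * δ = n := by
      rw [hB]
      field_simp
    rw [← hsum_eq]
    rw [← hsplit, hA]
    linarith
  have hQgeAll : ∀ y ∈ dualPolytope P, 0 ≤ pairing s0 y := by
    intro y hy
    have h1 : y ∈ convexHull ℚ (Set.extremePoints ℚ (convexHull ℚ (T : Set (E n)))) := by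
      rw [hDT] at hy
      exact hull_extremePoints T hy
    have h2 : Set.extremePoints ℚ (convexHull ℚ (T : Set (E n)))
        = vertices (dualPolytope P) := by
      show _ = Set.extremePoints ℚ (dualPolytope P)
      rw [hDT]
    rw [h2] at h1
    have h3 : ∀ z ∈ vertices (dualPolytope P), 0 ≤ pairing z s0 := by
      intro z hz
      rw [pairing_comm]
      exact hQge z hz
    have h4 := hull_ge (c := 0) h3 y h1
    rw [pairing_comm]
    exact h4
  have hQzero : ∀ u ∈ vertices (dualPolytope P), pairing s0 u = 0 := by
    intro u hu
    have hge := hQge u hu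
    set M := S.sup' hSne (fun s => |pairing s u|) with hM
    have hM0 : 0 ≤ M := by
      obtain ⟨s, hs⟩ := hSne
      have h := Finset.le_sup' (fun s => |pairing s u|) hs
      rw [hM]
      exact le_trans (abs_nonneg (pairing s u)) h
    set ε₀ : ℚ := 1 / (1 + M) with hε₀def
    have hε₀ : 0 < ε₀ := by positivity
    have hε₀M : ε₀ * (1 + M) = 1 := by
      rw [hε₀def]
      field_simp
    have hmem : (-ε₀) • u ∈ dualPolytope P := by
      rw [mem_dual_iff_gen hPS]
      intro s hs
      rw [pairing_smul_right]
      have habs : |pairing s u| ≤ M := by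
        rw [hM]
        exact Finset.le_sup' (fun s => |pairing s u|) hs
      nlinarith [neg_abs_le (pairing s u), le_abs_self (pairing s u)]
    have hle := hQgeAll _ hmem
    rw [pairing_smul_right] at hle
    nlinarith
  intro v hv u hu
  by_cases hcase : pairing v u = -1
  · exact Or.inl hcase
  · right
    obtain ⟨hA, hB, hge⟩ := hperu u hu
    have hvBF : v ∈ K.filter (fun v => ¬ pairing v u = -1) :=
      Finset.mem_filter.2 ⟨(hKmem v).2 hv, hcase⟩
    have hBsum : ∑ w ∈ K.filter (fun v => ¬ pairing v u = -1), pairing w u = (n : ℚ) := by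
      have hsplit : (∑ w ∈ K.filter (fun v => pairing v u = -1), pairing w u)
          + (∑ w ∈ K.filter (fun v => ¬ pairing v u = -1), pairing w u)
          = ∑ w ∈ K, pairing w u :=
        Finset.sum_filter_add_sum_filter_not K _ _
      rw [hsum_eq, hQzero u hu, hA] at hsplit
      linarith
    by_contra hne
    have hlt : δ < pairing v u := lt_of_le_of_ne (hge v hvBF) (Ne.symm hne)
    have h1 : ∑ _w ∈ K.filter (fun v => ¬ pairing v u = -1), δ
        < ∑ w ∈ K.filter (fun v => ¬ pairing v u = -1), pairing w u :=
      Finset.sum_lt_sum (fun i hi => hge i hi) ⟨v, hvBF, hlt⟩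
    rw [Finset.sum_const, nsmul_eq_mul, hBsum] at h1
    have h2 : ((K.filter (fun v => ¬ pairing v u = -1)).card : ℚ) * δ = n := by
      rw [hB]
      field_simp
    linarith


end Fano
end

section
/- Let P be a simplicial reflexive polytope of dimension n, let u_1, …, u_h be vertices of P* and m_1, …, m_h positive integers with m_1 u_1 + ⋯ + m_h u_h = 0, and set M := Σ_i m_i. Then for every vertex v of P: M ≤ 2·Σ_{i : ⟨v,u_i⟩ = −1} m_i + Σ_{i : ⟨v,u_i⟩ = 0} m_i. -/
/-! The numbers `aᵢ = ⟨v, uᵢ⟩` are integers, since `P` and `P*` are lattice polytopes, they are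
`≥ -1` because `uᵢ ∈ P*`, and `∑ mᵢ aᵢ = ⟨v, ∑ mᵢ uᵢ⟩ = 0`. -/

open Set Pointwise

namespace Fano

theorem pairing_eq_dotProduct {n : ℕ} (x y : E n) : pairing x y = x ⬝ᵥ y := rfl

theorem pairing_sum_smul {ι : Type*} {n : ℕ} (v : E n) (s : Finset ι)
    (c : ι → ℚ) (u : ι → E n) :
    pairing v (∑ i ∈ s, c i • u i) = ∑ i ∈ s, c i * pairing v (u i) := by
  simp only [pairing_eq_dotProduct, dotProduct_sum, dotProduct_smul, smul_eq_mul]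

theorem IsLatticePt.pairing_eq_intCast {n : ℕ} {x y : E n} (hx : IsLatticePt x)
    (hy : IsLatticePt y) : ∃ z : ℤ, pairing x y = z := by
  choose zx hzx using hx
  choose zy hzy using hy
  exact ⟨∑ i, zx i * zy i, by simp [pairing, hzx, hzy]⟩

theorem IsLatticePolytope.isLatticePt_of_mem_vertices {n : ℕ} {P : Set (E n)}
    (hP : IsLatticePolytope P) {x : E n} (hx : x ∈ vertices P) : IsLatticePt x := by
  obtain ⟨S, hS, rfl⟩ := hP
  exact hS x (extremePoints_convexHull_subset hx)

/-- An integer `a ≥ -1` satisfies `1 ≤ 2·[a = -1] + [a = 0] + a`; weighting by `m ≥ 0`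
and summing against `∑ mᵢ aᵢ = 0` gives the bound. -/
theorem sum_le_two_mul_sum_neg_one_add_sum_zero {ι : Type*} (s : Finset ι) (m a : ι → ℚ)
    (hm : ∀ i, 0 ≤ m i) (ha_int : ∀ i, ∃ z : ℤ, a i = z) (ha : ∀ i, -1 ≤ a i)
    (hsum : ∑ i ∈ s, m i * a i = 0) :
    ∑ i ∈ s, m i ≤
      2 * ∑ i ∈ s.filter (fun i => a i = -1), m i + ∑ i ∈ s.filter (fun i => a i = 0), m i := by
  have pointwise : ∀ i, m i ≤
      2 * (if a i = -1 then m i else 0) + (if a i = 0 then m i else 0) + m i * a i := by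
    intro i
    obtain ⟨z, hz⟩ := ha_int i
    have hz1 : -1 ≤ z := by exact_mod_cast hz ▸ ha i
    rcases (show z = -1 ∨ z = 0 ∨ 1 ≤ z by omega) with rfl | rfl | hz_pos
    · simp [hz, two_mul]
    · simp [hz]
    · have : (1 : ℚ) ≤ a i := hz ▸ (by exact_mod_cast hz_pos)
      rw [if_neg (by linarith), if_neg (by linarith)]
      nlinarith [hm i]
  calc ∑ i ∈ s, m i
      ≤ ∑ i ∈ s, (2 * (if a i = -1 then m i else 0) + (if a i = 0 then m i else 0)
          + m i * a i) := Finset.sum_le_sum fun i _ => pointwise i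
    _ = 2 * ∑ i ∈ s.filter (fun i => a i = -1), m i
          + ∑ i ∈ s.filter (fun i => a i = 0), m i + ∑ i ∈ s, m i * a i := by
      rw [Finset.sum_add_distrib, Finset.sum_add_distrib, ← Finset.mul_sum,
        Finset.sum_filter, Finset.sum_filter]
    _ = _ := by rw [hsum, add_zero]

theorem relation_mass_bound_general {n : ℕ} (P : Set (E n))
    (hrefl : IsReflexivePolytope P)
    (h : ℕ) (u : Fin h → E n) (m : Fin h → ℕ)
    (hu : ∀ i, u i ∈ vertices (dualPolytope P))
    (hrel : ∑ i, (m i : ℚ) • u i = 0)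
    (v : E n) (hv : v ∈ vertices P) :
    (∑ i, (m i : ℚ)) ≤
      2 * ∑ i ∈ Finset.univ.filter (fun i => pairing v (u i) = -1), (m i : ℚ)
      + ∑ i ∈ Finset.univ.filter (fun i => pairing v (u i) = 0), (m i : ℚ) := by
  obtain ⟨hP, -, hPdual⟩ := hrefl
  have hv_lat := hP.isLatticePt_of_mem_vertices hv
  refine sum_le_two_mul_sum_neg_one_add_sum_zero _ _ _ (fun i => Nat.cast_nonneg _)
    (fun i => hv_lat.pairing_eq_intCast (hPdual.isLatticePt_of_mem_vertices (hu i)))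
    (fun i => (hu i).1 v hv.1) ?_
  rw [← pairing_sum_smul, hrel]
  simp [pairing]

/-- Let `u₁, …, u_h ∈ V(P*)` and `m₁, …, m_h` positive integers with
`∑ mᵢ uᵢ = 0`, `M = ∑ mᵢ`. Then for every vertex `v` of `P`:
`M ≤ 2 ∑_{⟨v,uᵢ⟩ = -1} mᵢ + ∑_{⟨v,uᵢ⟩ = 0} mᵢ`. -/
theorem relation_mass_bound {n : ℕ} (hn : 1 ≤ n) (P : Set (E n))
    (hrefl : IsReflexivePolytope P) (hsimp : IsSimplicial P)
    (h : ℕ) (u : Fin h → E n) (m : Fin h → ℕ)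
    (hu : ∀ i, u i ∈ vertices (dualPolytope P)) (hm : ∀ i, 0 < m i)
    (hrel : ∑ i, (m i : ℚ) • u i = 0)
    (v : E n) (hv : v ∈ vertices P) :
    (∑ i, (m i : ℚ)) ≤
      2 * ∑ i ∈ Finset.univ.filter (fun i => pairing v (u i) = -1), (m i : ℚ)
      + ∑ i ∈ Finset.univ.filter (fun i => pairing v (u i) = 0), (m i : ℚ) :=
  relation_mass_bound_general P hrefl h u m hu hrel v hv

end Fano
end
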